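/- For all n ≥ 0, the number |P(n,2)| of permutations of n elements generated by 2 stacks in series is at most the number of strings of length 3n over the three-letter alphabet {m_1, m_2, m_3} that contain none of m_1m_3, m_1m_2m_2m_3, m_1m_2m_3m_2 as contiguous substrings. -/
import Mathlib


/-- A configuration ("state") of a system of `k` stacks in series: container `0`
is the input queue (front at the head of the list), containers `1, …, k` are the
stacks (top at the head), and container `k+1` is the output queue (front at the head). -/
abbrev Conf (k : ℕ) : Type := Fin (k + 2) → List ℕ

/-- Apply the move `m_{i+1}` (for `i : Fin (k+1)`): remove the element at the head of
container `i` and move it to container `i+1` (pushed on top if the destination is a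
stack, appended at the back if it is the output queue).  Returns `none` (the illegal
state `∅`) if the source container is empty. -/
def applyMove {k : ℕ} (i : Fin (k + 1)) (s : Conf k) : Option (Conf k) :=
  match s i.castSucc with
  | [] => none
  | x :: rest =>
      some fun j =>
        if j = i.castSucc then rest
        else if j = i.succ then
          (if (j : ℕ) = k + 1 then s j ++ [x] else x :: s j)
        else s j

/-- The action `w ∗ s` of a string of moves on an (optional) state; moves are applied
left to right, and the illegal state `none` is absorbing. -/
def act {k : ℕ} (w : List (Fin (k + 1))) (s : Option (Conf k)) : Option (Conf k) :=
  w.foldl (fun t i => t.bind (applyMove i)) s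

/-- The initial state `I(n,k)`: the input queue holds `1, …, n` (front to back),
and everything else is empty. -/
def initConf (n k : ℕ) : Conf k :=
  fun j => if (j : ℕ) = 0 then List.range' 1 n else []

/-- The final state whose output queue holds `out` (front to back), all else empty. -/
def finalConf (k : ℕ) (out : List ℕ) : Conf k :=
  fun j => if (j : ℕ) = k + 1 then out else []

/-- `π ∈ Sₙ` is generated by `k` stacks in series if some string of moves takes
`I(n,k)` to the final state with output queue `π(1), …, π(n)` (front to back). -/
def Generates (n k : ℕ) (π : Equiv.Perm (Fin n)) : Prop :=
  ∃ w : List (Fin (k + 1)),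
    act w (some (initConf n k)) = some (finalConf k (List.ofFn fun j => (π j : ℕ) + 1))

/-- `P(n,k)`, the set of permutations of `n` elements generated by `k` stacks in series. -/
def GenPerms (n k : ℕ) : Set (Equiv.Perm (Fin n)) := {π | Generates n k π}

/-- `k_n`, the least number of stacks needed to generate (equivalently, sort) every
permutation of `n` elements. -/
noncomputable def kStacks (n : ℕ) : ℕ := sInf {k | ∀ π : Equiv.Perm (Fin n), Generates n k π}

/-- Two move strings are equivalent, `u ∼ v`, if they act identically on every state. -/
def MoveEquiv {k : ℕ} (u v : List (Fin (k + 1))) : Prop :=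
  ∀ s : Conf k, act u (some s) = act v (some s)

set_option linter.unnecessarySeqFocus false
set_option linter.unnecessarySimpa false

section Aux
open List

lemma act_none {k : ℕ} (w : List (Fin (k+1))) : act w (none : Option (Conf k)) = none := by
  induction w with
  | nil => rfl
  | cons a w ih => simpa [act] using ih

lemma act_append {k : ℕ} (u v : List (Fin (k+1))) (t : Option (Conf k)) :
    act (u ++ v) t = act v (act u t) := List.foldl_append ..

lemma act_cons {k : ℕ} (i : Fin (k+1)) (w : List (Fin (k+1))) (s : Conf k) :
    act (i :: w) (some s) = act w (applyMove i s) := by simp [act]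

lemma apply0 (s : Conf 2) {x : ℕ} {r : List ℕ} (h : s 0 = x :: r) :
    applyMove (0 : Fin 3) s =
      some (fun j => if j = 0 then r else if j = 1 then x :: s j else s j) := by
  have h0 : (0:Fin 3).castSucc = (0 : Fin 4) := rfl
  unfold applyMove
  rw [h0, h]
  change some _ = some _
  congr 1
  funext j
  have h1 : (0:Fin 3).succ = (1 : Fin 4) := rfl
  rw [h1]
  by_cases e1 : j = (0:Fin 4) <;> by_cases e2 : j = (1:Fin 4) <;> simp_all

lemma apply1 (s : Conf 2) {x : ℕ} {r : List ℕ} (h : s 1 = x :: r) :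
    applyMove (1 : Fin 3) s =
      some (fun j => if j = 1 then r else if j = 2 then x :: s j else s j) := by
  have h0 : (1:Fin 3).castSucc = (1 : Fin 4) := rfl
  unfold applyMove
  rw [h0, h]
  change some _ = some _
  congr 1
  funext j
  have h1 : (1:Fin 3).succ = (2 : Fin 4) := rfl
  rw [h1]
  by_cases e1 : j = (1:Fin 4) <;> by_cases e2 : j = (2:Fin 4) <;> simp_all

lemma apply2 (s : Conf 2) {x : ℕ} {r : List ℕ} (h : s 2 = x :: r) :
    applyMove (2 : Fin 3) s =
      some (fun j => if j = 2 then r else if j = 3 then s j ++ [x] else s j) := by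
  have h0 : (2:Fin 3).castSucc = (2 : Fin 4) := rfl
  unfold applyMove
  rw [h0, h]
  change some _ = some _
  congr 1
  funext j
  have h1 : (2:Fin 3).succ = (3 : Fin 4) := rfl
  rw [h1]
  by_cases e1 : j = (2:Fin 4) <;> by_cases e2 : j = (3:Fin 4) <;>
    simp_all [show ((3:Fin 4):ℕ) = 3 from rfl]

lemma apply0_none (s : Conf 2) (h : s 0 = []) : applyMove (0 : Fin 3) s = none := by
  have h0 : (0:Fin 3).castSucc = (0 : Fin 4) := rfl
  unfold applyMove; rw [h0, h]

lemma apply1_none (s : Conf 2) (h : s 1 = []) : applyMove (1 : Fin 3) s = none := by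
  have h0 : (1:Fin 3).castSucc = (1 : Fin 4) := rfl
  unfold applyMove; rw [h0, h]

lemma apply2_none (s : Conf 2) (h : s 2 = []) : applyMove (2 : Fin 3) s = none := by
  have h0 : (2:Fin 3).castSucc = (2 : Fin 4) := rfl
  unfold applyMove; rw [h0, h]

end Aux

def phi (s : Conf 2) : ℕ := 3 * (s 0).length + 2 * (s 1).length + (s 2).length

lemma phi_applyMove {i : Fin 3} {s s' : Conf 2} (h : applyMove i s = some s') :
    phi s = phi s' + 1 := by
  fin_cases i
  · replace h : applyMove (0:Fin 3) s = some s' := h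
    cases h0 : s 0 with
    | nil => rw [apply0_none s h0] at h; cases h
    | cons x r =>
      rw [apply0 s h0] at h
      have h' : s' = _ := (Option.some_inj.mp h).symm
      subst h'
      simp [phi, h0]
      omega
  · replace h : applyMove (1:Fin 3) s = some s' := h
    cases h0 : s 1 with
    | nil => rw [apply1_none s h0] at h; cases h
    | cons x r =>
      rw [apply1 s h0] at h
      have h' : s' = _ := (Option.some_inj.mp h).symm
      subst h'
      simp [phi, h0]
      omega
  · replace h : applyMove (2:Fin 3) s = some s' := h
    cases h0 : s 2 with
    | nil => rw [apply2_none s h0] at h; cases h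
    | cons x r =>
      rw [apply2 s h0] at h
      have h' : s' = _ := (Option.some_inj.mp h).symm
      subst h'
      simp [phi, h0]
      omega

lemma act_phi : ∀ (w : List (Fin 3)) (s s' : Conf 2),
    act w (some s) = some s' → phi s = phi s' + w.length := by
  intro w
  induction w with
  | nil =>
    intro s s' h
    cases h
    simp
  | cons i w ih =>
    intro s s' h
    rw [act_cons] at h
    cases hm : applyMove i s with
    | none => rw [hm, act_none] at h; cases h
    | some t =>
      rw [hm] at h
      have h1 := ih t s' h
      have h2 := phi_applyMove hm
      simp only [List.length_cons]
      omega

lemma cs0 : (0:Fin 3).castSucc = (0:Fin 4) := rfl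
lemma cs1 : (1:Fin 3).castSucc = (1:Fin 4) := rfl
lemma cs2 : (2:Fin 3).castSucc = (2:Fin 4) := rfl
lemma sc0 : (0:Fin 3).succ = (1:Fin 4) := rfl
lemma sc1 : (1:Fin 3).succ = (2:Fin 4) := rfl
lemma sc2 : (2:Fin 3).succ = (3:Fin 4) := rfl
lemma v0 : ((0:Fin 4):ℕ) = 0 := rfl
lemma v1 : ((1:Fin 4):ℕ) = 1 := rfl
lemma v2 : ((2:Fin 4):ℕ) = 2 := rfl
lemma v3 : ((3:Fin 4):ℕ) = 3 := rfl

lemma equiv1 : MoveEquiv ([0,2] : List (Fin 3)) [2,0] := by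
  intro s
  rcases h0 : s 0 with _ | ⟨x, r0⟩ <;> rcases h2 : s 2 with _ | ⟨z, r2⟩ <;>
      simp [act, applyMove, h0, h2, cs0, cs1, cs2, sc0, sc1, sc2, v0, v1, v2, v3] <;>
    (funext j; fin_cases j <;> simp [h0, h2])

lemma equiv2 : MoveEquiv ([0,1,1,2] : List (Fin 3)) [1,2,0,1] := by
  intro s
  rcases h0 : s 0 with _ | ⟨x, r0⟩ <;> rcases h1 : s 1 with _ | ⟨y, r1⟩ <;>
      simp [act, applyMove, h0, h1, cs0, cs1, cs2, sc0, sc1, sc2, v0, v1, v2, v3] <;>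
    (funext j; fin_cases j <;> simp [h0, h1])

lemma equiv3 : MoveEquiv ([0,1,2,1] : List (Fin 3)) [1,0,1,2] := by
  intro s
  rcases h0 : s 0 with _ | ⟨x, r0⟩ <;> rcases h1 : s 1 with _ | ⟨y, r1⟩ <;>
      simp [act, applyMove, h0, h1, cs0, cs1, cs2, sc0, sc1, sc2, v0, v1, v2, v3] <;>
    (funext j; fin_cases j <;> simp [h0, h1])

lemma moveEquiv_opt {k : ℕ} {u v : List (Fin (k+1))} (h : MoveEquiv u v)
    (t : Option (Conf k)) : act u t = act v t := by
  cases t with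
  | none => rw [act_none, act_none]
  | some s => exact h s

lemma act_infix_subst {u v : List (Fin 3)} (h : MoveEquiv u v) (a b : List (Fin 3))
    (t : Option (Conf 2)) : act (a ++ u ++ b) t = act (a ++ v ++ b) t := by
  rw [act_append, act_append, act_append, act_append, moveEquiv_opt h]

lemma ofFn_of_length {α : Type*} (l : List α) (m : ℕ) (h : l.length = m) :
    List.ofFn (fun i : Fin m => l.get (Fin.cast h.symm i)) = l := by
  subst h
  simpa using List.ofFn_get l

lemma final_inj {out1 out2 : List ℕ} (h : finalConf 2 out1 = finalConf 2 out2) :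
    out1 = out2 := by
  have := congrFun h 3
  simpa [finalConf, v3] using this

lemma phi_init (n : ℕ) : phi (initConf n 2) = 3 * n := by
  simp [phi, initConf, v0, v1, v2]

lemma phi_final (out : List ℕ) : phi (finalConf 2 out) = 0 := by
  simp [phi, finalConf, v0, v1, v2]

lemma gen_length {n : ℕ} {w : List (Fin 3)} {out : List ℕ}
    (h : act w (some (initConf n 2)) = some (finalConf 2 out)) : w.length = 3 * n := by
  have h1 := act_phi w _ _ h
  rw [phi_init, phi_final] at h1
  omega


/-- `|P(n,2)|` is at most the number of strings of length `3n` over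
`{m₁, m₂, m₃}` (encoded as `Fin 3`, strings of length `3n` encoded as functions
`Fin (3n) → Fin 3`) avoiding the factors `m₁m₃`, `m₁m₂m₂m₃`, `m₁m₂m₃m₂`. -/
theorem card_genPerms_two_le_avoiding (n : ℕ) :
    (GenPerms n 2).ncard ≤
      (Finset.univ.filter fun f : Fin (3 * n) → Fin 3 =>
        ¬ [0, 2] <:+: List.ofFn f ∧ ¬ [0, 1, 1, 2] <:+: List.ofFn f ∧
          ¬ [0, 1, 2, 1] <:+: List.ofFn f).card := by
  classical
  set T := (Finset.univ.filter fun f : Fin (3 * n) → Fin 3 =>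
        ¬ [0, 2] <:+: List.ofFn f ∧ ¬ [0, 1, 1, 2] <:+: List.ofFn f ∧
          ¬ [0, 1, 2, 1] <:+: List.ofFn f) with hT
  have key : ∀ π : Equiv.Perm (Fin n), π ∈ GenPerms n 2 → ∃ f : Fin (3*n) → Fin 3,
      f ∈ T ∧ act (List.ofFn f) (some (initConf n 2)) =
        some (finalConf 2 (List.ofFn fun j => (π j : ℕ) + 1)) := by
    intro π hπ
    obtain ⟨w, hw⟩ := hπ
    have hwl : w.length = 3 * n := gen_length hw
    set P : (Fin (3*n) → Fin 3) → Prop := fun f =>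
      act (List.ofFn f) (some (initConf n 2)) =
        some (finalConf 2 (List.ofFn fun j => (π j : ℕ) + 1)) with hP
    have hne : (Finset.univ.filter P).Nonempty := by
      refine ⟨fun i => w.get (Fin.cast hwl.symm i), ?_⟩
      rw [Finset.mem_filter]
      exact ⟨Finset.mem_univ _, by rw [hP]; dsimp only; rw [ofFn_of_length w _ hwl]; exact hw⟩
    obtain ⟨f, hf, hmax⟩ := Finset.exists_max_image _ (fun f => List.ofFn f) hne
    have hPf : P f := (Finset.mem_filter.mp hf).2
    have noFactor : ∀ u v : List (Fin 3), MoveEquiv u v → u.length = v.length →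
        (∀ c : List (Fin 3), List.Lex (· < ·) (u ++ c) (v ++ c)) →
        ¬ u <:+: List.ofFn f := by
      rintro u v hequiv hlen hlex ⟨a, b, hab⟩
      have hl' : (a ++ v ++ b).length = 3 * n := by
        have h1 : (a ++ u ++ b).length = (List.ofFn f).length := by rw [hab]
        simp only [List.length_append, List.length_ofFn] at h1 ⊢
        omega
      set g : Fin (3*n) → Fin 3 := fun i => (a ++ v ++ b).get (Fin.cast hl'.symm i) with hg
      have hofg : List.ofFn g = a ++ v ++ b := ofFn_of_length _ _ hl'
      have hPg : P g := by
        rw [hP]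
        dsimp only
        rw [hofg, ← act_infix_subst hequiv a b, hab]
        exact hPf
      have hle : List.ofFn g ≤ List.ofFn f := by
        refine hmax g ?_
        rw [Finset.mem_filter]
        exact ⟨Finset.mem_univ _, hPg⟩
      have hlt : List.ofFn f < List.ofFn g := by
        rw [hofg, ← hab, List.append_assoc, List.append_assoc]
        exact List.Lex.append_left _ (hlex b) a
      exact absurd hle (not_le_of_gt hlt)
    refine ⟨f, ?_, hPf⟩
    rw [hT, Finset.mem_filter]
    refine ⟨Finset.mem_univ _, ?_, ?_, ?_⟩
    · exact noFactor [0,2] [2,0] equiv1 rfl (fun c => List.Lex.rel (by decide))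
    · exact noFactor [0,1,1,2] [1,2,0,1] equiv2 rfl (fun c => List.Lex.rel (by decide))
    · exact noFactor [0,1,2,1] [1,0,1,2] equiv3 rfl (fun c => List.Lex.rel (by decide))
  -- build the injection
  choose F hFT hFact using key
  set G : Equiv.Perm (Fin n) → (Fin (3*n) → Fin 3) := fun π =>
    if h : π ∈ GenPerms n 2 then F π h else fun _ => 0 with hG
  have hinj : Set.InjOn G (GenPerms n 2) := by
    intro π₁ h₁ π₂ h₂ hEq
    rw [hG] at hEq
    dsimp only at hEq
    rw [dif_pos h₁, dif_pos h₂] at hEq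
    have e1 := hFact π₁ h₁
    have e2 := hFact π₂ h₂
    rw [hEq] at e1
    rw [e2] at e1
    have e3 := final_inj (Option.some_inj.mp e1).symm
    have e4 : ∀ j : Fin n, (π₁ j : ℕ) + 1 = (π₂ j : ℕ) + 1 := by
      intro j
      exact congrFun (List.ofFn_inj.mp e3) j
    ext j
    have := e4 j
    omega
  have himg : G '' (GenPerms n 2) ⊆ (T : Set (Fin (3*n) → Fin 3)) := by
    rintro _ ⟨π, hπ, rfl⟩
    rw [hG]
    dsimp only
    rw [dif_pos hπ]
    exact hFT π hπ
  calc (GenPerms n 2).ncard = (G '' (GenPerms n 2)).ncard :=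
        (Set.ncard_image_of_injOn hinj).symm
    _ ≤ (T : Set (Fin (3*n) → Fin 3)).ncard := Set.ncard_le_ncard himg (Set.toFinite _)
    _ = T.card := Set.ncard_coe_finset T
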